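/- For k ∈ ℤ define u_k = (2+√3)^k − (2−√3)^k. Let A, B be real numbers with B ≠ 0, let M ≥ 1, and assume u_m + u_{m-1}·B ≠ 0 for every 1 ≤ m ≤ M. Define sequences (A_m) and (B_m) by A_1 = A, B_1 = B; A_2 = 4A/(4+B), B_2 = −B/(4+B); and for 2 ≤ m ≤ M−1: A_{m+1} = [4·A_m + (B_m/B_{m-1})·A_{m-1}]/(4 + B_m/B_{m-1}) and B_{m+1} = −B_m/(4 + B_m/B_{m-1}). Then for every 1 ≤ m ≤ M these recursions are well defined (all denominators are nonzero, and B_m ≠ 0), and A_m = u_m·A/(u_m + u_{m-1}·B), B_m = (−1)^{m-1}·u_1·B/(u_m + u_{m-1}·B). -/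

import Mathlib

/-!
Both `u` and `D_m = u_m + u_{m-1} B` satisfy `x_{m+1} = 4 x_m - x_{m-1}`, since `2 ± √3` are the
roots of `x² - 4x + 1`, and `D_1 = u_1`, `D_2 = u_1 (4 + B)`. Along the claimed closed forms
`B_m / B_{m-1} = -D_{m-1} / D_m`, hence `4 + B_m / B_{m-1} = D_{m+1} / D_m`, and the two
recursions reduce to the three-term recurrences of `D` and `u`. Induction in steps of two then
identifies `A_m`, `B_m` with the closed forms, which also shows all denominators are nonzero.
-/

noncomputable def uSeq (k : ℤ) : ℝ :=
  (2 + Real.sqrt 3) ^ k - (2 - Real.sqrt 3) ^ k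

theorem zpow_add_one_add_zpow_sub_one {K : Type*} [DivisionRing K] {a b : K} (hab : a * b = 1)
    (k : ℤ) : a ^ (k + 1) + a ^ (k - 1) = a ^ k * (a + b) := by
  have ha : a ≠ 0 := left_ne_zero_of_mul_eq_one hab
  rw [zpow_add_one₀ ha, zpow_sub_one₀ ha, inv_eq_of_mul_eq_one_right hab, mul_add]

theorem two_add_sqrt_three_mul_two_sub : (2 + √3) * (2 - √3) = 1 := by
  nlinarith [Real.sq_sqrt (show (0 : ℝ) ≤ 3 by norm_num)]

theorem uSeq_add_one (k : ℤ) : uSeq (k + 1) = 4 * uSeq k - uSeq (k - 1) := by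
  have hα := zpow_add_one_add_zpow_sub_one two_add_sqrt_three_mul_two_sub k
  have hβ := zpow_add_one_add_zpow_sub_one
    ((mul_comm _ _).trans two_add_sqrt_three_mul_two_sub) k
  simp only [uSeq]
  linear_combination hα - hβ

theorem uSeq_zero : uSeq 0 = 0 := by simp [uSeq]

theorem uSeq_one_ne_zero : uSeq 1 ≠ 0 := by
  simp only [uSeq, zpow_one]
  have : (0 : ℝ) < √3 := by positivity
  linarith

noncomputable def uDen (B : ℝ) (m : ℕ) : ℝ := uSeq m + uSeq ((m : ℤ) - 1) * B

theorem uDen_add_two (B : ℝ) (n : ℕ) : uDen B (n + 2) = 4 * uDen B (n + 1) - uDen B n := by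
  have h₁ := uSeq_add_one ((n : ℤ) + 1)
  have h₀ := uSeq_add_one (n : ℤ)
  simp only [uDen]
  push_cast
  ring_nf at h₁ h₀ ⊢
  linear_combination h₁ + B * h₀

theorem uDen_one (B : ℝ) : uDen B 1 = uSeq 1 := by
  simp [uDen, uSeq_zero]

theorem uSeq_two : uSeq 2 = 4 * uSeq 1 := by
  simpa [uSeq_zero] using uSeq_add_one 1

theorem uDen_two (B : ℝ) : uDen B 2 = uSeq 1 * (4 + B) := by
  norm_num [uDen, uSeq_two]
  ring

noncomputable def closedA (A B : ℝ) (m : ℕ) : ℝ := uSeq m * A / uDen B m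

noncomputable def closedB (B : ℝ) (m : ℕ) : ℝ := (-1) ^ (m - 1) * uSeq 1 * B / uDen B m

section closedForms

variable {B : ℝ} {n : ℕ}

theorem closedB_ne_zero (hB : B ≠ 0) (hd : uDen B n ≠ 0) : closedB B n ≠ 0 := by
  unfold closedB
  have := uSeq_one_ne_zero
  positivity

theorem closedB_ratio (hB : B ≠ 0) (hd₁ : uDen B (n + 1) ≠ 0) :
    closedB B (n + 2) / closedB B (n + 1) = -(uDen B (n + 1) / uDen B (n + 2)) := by
  have := uSeq_one_ne_zero
  simp only [closedB, Nat.reduceSubDiff, Nat.add_sub_cancel, pow_succ]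
  field_simp

theorem four_add_closedB_ratio (hB : B ≠ 0) (hd₁ : uDen B (n + 1) ≠ 0)
    (hd₂ : uDen B (n + 2) ≠ 0) :
    4 + closedB B (n + 2) / closedB B (n + 1) = uDen B (n + 3) / uDen B (n + 2) := by
  rw [closedB_ratio hB hd₁, uDen_add_two B (n + 1)]
  field_simp
  ring

variable {A : ℝ}

theorem closedB_add_three (hB : B ≠ 0) (hd₁ : uDen B (n + 1) ≠ 0)
    (hd₂ : uDen B (n + 2) ≠ 0) :
    closedB B (n + 3) = -closedB B (n + 2) / (4 + closedB B (n + 2) / closedB B (n + 1)) := by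
  rw [four_add_closedB_ratio hB hd₁ hd₂]
  simp only [closedB, Nat.reduceSubDiff, pow_succ]
  field_simp

theorem closedA_add_three (hB : B ≠ 0) (hd₁ : uDen B (n + 1) ≠ 0)
    (hd₂ : uDen B (n + 2) ≠ 0) :
    closedA A B (n + 3) = (4 * closedA A B (n + 2) +
        closedB B (n + 2) / closedB B (n + 1) * closedA A B (n + 1)) /
      (4 + closedB B (n + 2) / closedB B (n + 1)) := by
  have hu : uSeq (n + 3 : ℕ) = 4 * uSeq (n + 2 : ℕ) - uSeq (n + 1 : ℕ) := by
    push_cast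
    convert uSeq_add_one ((n : ℤ) + 2) using 2 <;> ring_nf
  rw [four_add_closedB_ratio hB hd₁ hd₂, closedB_ratio hB hd₁]
  simp only [closedA, hu]
  field_simp
  ring

end closedForms

theorem eq_closedA_and_eq_closedB {A B : ℝ} (hB : B ≠ 0) {M : ℕ}
    (hd : ∀ m : ℕ, 1 ≤ m → m ≤ M → uDen B m ≠ 0) {As Bs : ℕ → ℝ}
    (hA1 : As 1 = A) (hB1 : Bs 1 = B)
    (hA2 : 2 ≤ M → As 2 = 4 * A / (4 + B)) (hB2 : 2 ≤ M → Bs 2 = -B / (4 + B))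
    (hArec : ∀ m : ℕ, 2 ≤ m → m ≤ M - 1 →
      As (m + 1) = (4 * As m + (Bs m / Bs (m - 1)) * As (m - 1)) / (4 + Bs m / Bs (m - 1)))
    (hBrec : ∀ m : ℕ, 2 ≤ m → m ≤ M - 1 → Bs (m + 1) = -Bs m / (4 + Bs m / Bs (m - 1)))
    (n : ℕ) (hn : n + 1 ≤ M) :
    As (n + 1) = closedA A B (n + 1) ∧ Bs (n + 1) = closedB B (n + 1) := by
  induction n using Nat.twoStepInduction with
  | zero => simp [closedA, closedB, uDen_one, hA1, hB1, uSeq_one_ne_zero]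
  | one =>
    have := uSeq_one_ne_zero
    have : 4 + B ≠ 0 := right_ne_zero_of_mul (uDen_two B ▸ hd 2 one_le_two hn)
    norm_num [closedA, closedB, hA2 hn, hB2 hn, uDen_two, uSeq_two]
    constructor <;> field_simp
  | more n ih₁ ih₂ =>
    obtain ⟨hA₁, hB₁⟩ := ih₁ (by omega)
    obtain ⟨hA₂, hB₂⟩ := ih₂ (by omega)
    have hd₁ := hd (n + 1) (by omega) (by omega)
    have hd₂ := hd (n + 2) (by omega) (by omega)
    have hA₃ := hArec (n + 2) (by omega) (by omega)
    have hB₃ := hBrec (n + 2) (by omega) (by omega)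
    simp only [Nat.reduceSubDiff, hA₁, hB₁, hA₂, hB₂] at hA₃ hB₃
    exact ⟨hA₃.trans (closedA_add_three hB hd₁ hd₂).symm,
      hB₃.trans (closedB_add_three hB hd₁ hd₂).symm⟩

theorem backward_coefficients_closed_form_general
    (A B : ℝ) (hB : B ≠ 0) (M : ℕ)
    (hden : ∀ m : ℕ, 1 ≤ m → m ≤ M → uSeq (m : ℤ) + uSeq ((m : ℤ) - 1) * B ≠ 0)
    (As Bs : ℕ → ℝ)
    (hA1 : As 1 = A) (hB1 : Bs 1 = B)
    (hA2 : 2 ≤ M → As 2 = 4 * A / (4 + B))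
    (hB2 : 2 ≤ M → Bs 2 = -B / (4 + B))
    (hArec : ∀ m : ℕ, 2 ≤ m → m ≤ M - 1 →
      As (m + 1) = (4 * As m + (Bs m / Bs (m - 1)) * As (m - 1)) / (4 + Bs m / Bs (m - 1)))
    (hBrec : ∀ m : ℕ, 2 ≤ m → m ≤ M - 1 →
      Bs (m + 1) = -Bs m / (4 + Bs m / Bs (m - 1))) :
    (2 ≤ M → 4 + B ≠ 0) ∧
    (∀ m : ℕ, 2 ≤ m → m ≤ M - 1 → 4 + Bs m / Bs (m - 1) ≠ 0) ∧
    (∀ m : ℕ, 1 ≤ m → m ≤ M →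
      Bs m ≠ 0 ∧
      As m = uSeq (m : ℤ) * A / (uSeq (m : ℤ) + uSeq ((m : ℤ) - 1) * B) ∧
      Bs m = (-1 : ℝ) ^ (m - 1) * uSeq 1 * B / (uSeq (m : ℤ) + uSeq ((m : ℤ) - 1) * B)) := by
  have hd : ∀ m, 1 ≤ m → m ≤ M → uDen B m ≠ 0 := hden
  have closed := eq_closedA_and_eq_closedB hB hd hA1 hB1 hA2 hB2 hArec hBrec
  refine ⟨fun h2 => right_ne_zero_of_mul (uDen_two B ▸ hd 2 one_le_two h2),
    fun m h2 hM => ?_, fun m h1 hM => ?_⟩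
  · obtain ⟨n, rfl⟩ : ∃ n, m = n + 2 := ⟨m - 2, by omega⟩
    obtain ⟨-, hB₁⟩ := closed n (by omega)
    obtain ⟨-, hB₂⟩ := closed (n + 1) (by omega)
    have hd₂ := hd (n + 2) (by omega) (by omega)
    rw [show n + 2 - 1 = n + 1 from rfl, hB₁, hB₂,
      four_add_closedB_ratio hB (hd (n + 1) (by omega) (by omega)) hd₂]
    exact div_ne_zero (hd (n + 3) (by omega) (by omega)) hd₂
  · obtain ⟨n, rfl⟩ : ∃ n, m = n + 1 := ⟨m - 1, by omega⟩
    obtain ⟨hA, hB'⟩ := closed n hM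
    exact ⟨hB' ▸ closedB_ne_zero hB (hd _ h1 hM), hA, hB'⟩

/-- **Closed form of the backward extension coefficients in the uniform-per-patch
case.** With base values `A_1 = A`, `B_1 = B ≠ 0` and the stated recursions,
all denominators are nonzero, `B_m ≠ 0`, and
`A_m = u_m A/(u_m + u_{m-1} B)`, `B_m = (−1)^{m-1} u_1 B/(u_m + u_{m-1} B)`
for every `1 ≤ m ≤ M`. -/
theorem backward_coefficients_closed_form
    (A B : ℝ) (hB : B ≠ 0) (M : ℕ) (hM : 1 ≤ M)
    (hden : ∀ m : ℕ, 1 ≤ m → m ≤ M → uSeq (m : ℤ) + uSeq ((m : ℤ) - 1) * B ≠ 0)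
    (As Bs : ℕ → ℝ)
    (hA1 : As 1 = A) (hB1 : Bs 1 = B)
    (hA2 : 2 ≤ M → As 2 = 4 * A / (4 + B))
    (hB2 : 2 ≤ M → Bs 2 = -B / (4 + B))
    (hArec : ∀ m : ℕ, 2 ≤ m → m ≤ M - 1 →
      As (m + 1) = (4 * As m + (Bs m / Bs (m - 1)) * As (m - 1)) / (4 + Bs m / Bs (m - 1)))
    (hBrec : ∀ m : ℕ, 2 ≤ m → m ≤ M - 1 →
      Bs (m + 1) = -Bs m / (4 + Bs m / Bs (m - 1))) :
    (2 ≤ M → 4 + B ≠ 0) ∧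
    (∀ m : ℕ, 2 ≤ m → m ≤ M - 1 → 4 + Bs m / Bs (m - 1) ≠ 0) ∧
    (∀ m : ℕ, 1 ≤ m → m ≤ M →
      Bs m ≠ 0 ∧
      As m = uSeq (m : ℤ) * A / (uSeq (m : ℤ) + uSeq ((m : ℤ) - 1) * B) ∧
      Bs m = (-1 : ℝ) ^ (m - 1) * uSeq 1 * B / (uSeq (m : ℤ) + uSeq ((m : ℤ) - 1) * B)) :=
  backward_coefficients_closed_form_general A B hB M hden As Bs hA1 hB1 hA2 hB2 hArec hBrec
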